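/- Let N be a positive integer, ξ > 0, and for k ∈ ℤ^N let H_k := ∏_{i=1}^N [2πk_i/ξ, 2π(k_i+1)/ξ] ⊆ ℝ^N. For 1 ≤ i ≤ N let f_i : ℝ → ℂ be measurable, 2π-periodic, with |f_i(t)| ≤ 1 for all t. Let g : ℝ^N → ℝ be a continuously differentiable probability density (g ≥ 0 and ∫_{ℝ^N} g = 1) such that the families (sup_{x∈H_k} ‖∇g(x)‖)_{k∈ℤ^N} and (g(2πk/ξ))_{k∈ℤ^N} are summable. Then for every y ∈ ℝ^N: |∫_{ℝ^N} (∏_{i=1}^N f_i(ξ(x_i + y_i))) g(x) dx − ∏_{i=1}^N (1/(2π)) ∫_0^{2π} f_i(t) dt| ≤ 4π (√N/ξ) Σ_{k∈ℤ^N} (2π/ξ)^N sup_{x∈H_k} ‖∇g(x)‖. -/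

import Mathlib

open MeasureTheory Filter Real

/-- The cube `H_k = ∏_i [2πk_i/ξ, 2π(k_i+1)/ξ]` in `ℝ^N`. -/
def cube (N : ℕ) (ξ : ℝ) (k : Fin N → ℤ) : Set (EuclideanSpace ℝ (Fin N)) :=
  {x | ∀ i, x i ∈ Set.Icc (2 * π * (k i : ℝ) / ξ) (2 * π * ((k i : ℝ) + 1) / ξ)}

/-!
Tile `ℝ^N` by the half-open cubes of side `T = 2π/ξ`. On each of them every factor of
`Φ(x) = ∏ f_i(ξ(x_i + y_i))` runs through exactly one period, so `∫ (Φ - C) = 0` over the cube,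
where `C` is the product of the averages. Hence `g` may be replaced there by `g` minus its value
at a corner, which the mean value theorem bounds by `√N T sup_{H_k} ‖∇g‖`; together with
`‖Φ - C‖ ≤ 2` and the volume `T^N` of the cube this gives the estimate after summing over `k`.
-/

open Set Function

theorem Function.Periodic.setIntegral_Ico_comp_mul_add {E : Type*} [NormedAddCommGroup E]
    [NormedSpace ℝ E] {f : ℝ → E} {p : ℝ} (hf : Periodic f p) (hp : 0 ≤ p) {ξ : ℝ} (hξ : 0 < ξ)
    (a b : ℝ) :
    ∫ t in Ico a (a + p / ξ), f (ξ * (t + b)) = ξ⁻¹ • ∫ t in (0 : ℝ)..p, f t := by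
  rw [setIntegral_congr_set Ico_ae_eq_Ioc,
    ← intervalIntegral.integral_of_le (le_add_of_nonneg_right (by positivity))]
  simp_rw [mul_add]
  rw [intervalIntegral.integral_comp_mul_add f hξ.ne', mul_add, mul_div_cancel₀ _ hξ.ne',
    add_right_comm, hf.intervalIntegral_add_eq _ 0, zero_add]

theorem setIntegral_univ_pi_prod {ι 𝕜 : Type*} [Fintype ι] [RCLike 𝕜] {X : ι → Type*}
    [∀ i, MeasurableSpace (X i)] (μ : ∀ i, Measure (X i)) [∀ i, SigmaFinite (μ i)]
    (s : ∀ i, Set (X i)) (h : ∀ i, X i → 𝕜) :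
    ∫ z in univ.pi s, ∏ i, h i (z i) ∂Measure.pi μ = ∏ i, ∫ t in s i, h i t ∂μ i := by
  rw [Measure.restrict_pi_pi, integral_fintype_prod_eq_prod]

section Boxes

variable {ι : Type*} {T : ℝ}

/-- The half-open version of `H_k` when `T = 2π/ξ`; it lives in `ι → ℝ` rather than in Euclidean
space so that Fubini's theorem applies to it. -/
def boxIco (T : ℝ) (k : ι → ℤ) : Set (ι → ℝ) := univ.pi fun i => Ico (k i • T) ((k i + 1) • T)

theorem measurableSet_boxIco [Countable ι] (k : ι → ℤ) : MeasurableSet (boxIco T k) :=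
  .univ_pi fun _ => measurableSet_Ico

theorem iUnion_boxIco (hT : 0 < T) : ⋃ k, boxIco (ι := ι) T k = univ := by
  unfold boxIco
  rw [iUnion_univ_pi (fun _ (j : ℤ) => Ico (j • T) ((j + 1) • T)),
    iUnion_Ico_zsmul hT, pi_univ]

theorem pairwise_disjoint_boxIco : Pairwise (Disjoint on boxIco (ι := ι) T) := by
  intro k l hkl
  obtain ⟨i, hi⟩ := Function.ne_iff.1 hkl
  exact disjoint_univ_pi.2 ⟨i, pairwise_disjoint_Ico_zsmul T hi⟩

theorem volume_boxIco [Fintype ι] (k : ι → ℤ) :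
    volume (boxIco T k) = ENNReal.ofReal T ^ Fintype.card ι := by
  simp [boxIco, volume_pi_pi, Real.volume_Ico, add_smul]

end Boxes

theorem norm_setIntegral_mul_le_of_setIntegral_eq_zero {α 𝕜 : Type*} [MeasurableSpace α]
    [RCLike 𝕜] {μ : Measure α} {s : Set α} (hs : μ s < ⊤) {ψ : α → 𝕜} {G : α → ℝ} {M ε c : ℝ}
    (hψ : IntegrableOn ψ s μ) (hψ0 : ∫ z in s, ψ z ∂μ = 0)
    (hψG : IntegrableOn (fun z => ψ z * G z) s μ)
    (hψM : ∀ z ∈ s, ‖ψ z‖ ≤ M) (hGc : ∀ z ∈ s, |G z - c| ≤ ε) :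
    ‖∫ z in s, ψ z * G z ∂μ‖ ≤ M * ε * μ.real s := by
  have hcentre : ∫ z in s, ψ z * G z ∂μ = ∫ z in s, ψ z * ((G z - c : ℝ) : 𝕜) ∂μ := by
    simp_rw [RCLike.ofReal_sub, mul_sub]
    rw [integral_sub hψG (hψ.mul_const _), integral_mul_const, hψ0, zero_mul, sub_zero]
  rw [hcentre]
  refine norm_setIntegral_le_of_norm_le_const hs fun z hz => ?_
  rw [norm_mul, RCLike.norm_ofReal]
  exact mul_le_mul (hψM z hz) (hGc z hz) (abs_nonneg _) ((norm_nonneg _).trans (hψM z hz))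

theorem norm_integral_le_tsum_of_iUnion_eq_univ {α κ E : Type*} [MeasurableSpace α]
    [Countable κ] [NormedAddCommGroup E] [NormedSpace ℝ E] {μ : Measure α} {S : κ → Set α}
    (hSm : ∀ k, MeasurableSet (S k)) (hSd : Pairwise (Disjoint on S)) (hSu : ⋃ k, S k = univ)
    {F : α → E} (hF : Integrable F μ) {b : κ → ℝ} (hb : ∀ k, ‖∫ z in S k, F z ∂μ‖ ≤ b k)
    (hbs : Summable b) : ‖∫ z, F z ∂μ‖ ≤ ∑' k, b k := by
  have hnorm : Summable fun k => ‖∫ z in S k, F z ∂μ‖ :=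
    hbs.of_nonneg_of_le (fun _ => norm_nonneg _) hb
  rw [← setIntegral_univ, ← hSu, integral_iUnion hSm hSd hF.integrableOn]
  exact (norm_tsum_le_tsum_norm hnorm).trans (hnorm.tsum_le_tsum hb hbs)

theorem IsCompact.le_biSup_of_continuousOn {X : Type*} [TopologicalSpace X] {s : Set X}
    (hs : IsCompact s) {F : X → ℝ} (hF : ContinuousOn F s) {x : X} (hx : x ∈ s) :
    F x ≤ ⨆ y ∈ s, F y :=
  le_ciSup₂ (f := fun y (_ : y ∈ s) => F y)
    ((hs.bddAbove_image hF).mono (iUnion_subset fun _ => range_subset_iff.2 fun hy =>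
      mem_image_of_mem F hy)) x hx

theorem norm_gradient_eq_norm_fderiv {E : Type*} [NormedAddCommGroup E] [InnerProductSpace ℝ E]
    [CompleteSpace E] (g : E → ℝ) (x : E) : ‖gradient g x‖ = ‖fderiv ℝ g x‖ :=
  (InnerProductSpace.toDual ℝ E).symm.norm_map _

section Cube

variable {N : ℕ} {ξ : ℝ} {k : Fin N → ℤ}

theorem cube_eq_preimage_pi (N : ℕ) (ξ : ℝ) (k : Fin N → ℤ) :
    cube N ξ k = WithLp.ofLp ⁻¹'
      univ.pi fun i => Icc (2 * π * (k i : ℝ) / ξ) (2 * π * ((k i : ℝ) + 1) / ξ) := by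
  ext x
  simp only [cube, mem_ofPred_eq, mem_preimage, mem_univ_pi]

theorem isCompact_cube (N : ℕ) (ξ : ℝ) (k : Fin N → ℤ) : IsCompact (cube N ξ k) := by
  rw [cube_eq_preimage_pi]
  exact (PiLp.homeomorph 2 _).isCompact_preimage.2 (isCompact_univ_pi fun _ => isCompact_Icc)

theorem convex_cube (N : ℕ) (ξ : ℝ) (k : Fin N → ℤ) : Convex ℝ (cube N ξ k) := by
  rw [cube_eq_preimage_pi]
  exact (convex_pi fun _ _ => convex_Icc _ _).linear_preimage
    (WithLp.linearEquiv 2 ℝ _).toLinearMap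

theorem norm_sub_le_of_mem_cube (hξ : 0 < ξ) {x y : EuclideanSpace ℝ (Fin N)}
    (hx : x ∈ cube N ξ k) (hy : y ∈ cube N ξ k) : ‖x - y‖ ≤ √N * (2 * π / ξ) := by
  have hcoord : ∀ i, ‖(x - y) i‖ ^ 2 ≤ (2 * π / ξ) ^ 2 := fun i => by
    have h := Real.dist_le_of_mem_Icc (hx i) (hy i)
    rw [Real.dist_eq, show 2 * π * ((k i : ℝ) + 1) / ξ - 2 * π * k i / ξ = 2 * π / ξ by ring] at h
    simpa [sq_abs] using pow_le_pow_left₀ (abs_nonneg _) h 2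
  calc ‖x - y‖ = √(∑ i, ‖(x - y) i‖ ^ 2) := EuclideanSpace.norm_eq _
    _ ≤ √(∑ _i : Fin N, (2 * π / ξ) ^ 2) :=
        Real.sqrt_le_sqrt (Finset.sum_le_sum fun i _ => hcoord i)
    _ = √N * (2 * π / ξ) := by
      rw [Finset.sum_const, Finset.card_univ, Fintype.card_fin, nsmul_eq_mul,
        Real.sqrt_mul (Nat.cast_nonneg _), Real.sqrt_sq (by positivity)]

theorem abs_sub_le_of_mem_cube (hξ : 0 < ξ) {g : EuclideanSpace ℝ (Fin N) → ℝ}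
    (hg : ContDiff ℝ 1 g) {x y : EuclideanSpace ℝ (Fin N)} (hx : x ∈ cube N ξ k)
    (hy : y ∈ cube N ξ k) :
    |g x - g y| ≤ (⨆ z ∈ cube N ξ k, ‖gradient g z‖) * (√N * (2 * π / ξ)) := by
  have hgrad : Continuous fun z => ‖gradient g z‖ := by
    simp_rw [norm_gradient_eq_norm_fderiv]
    exact (hg.continuous_fderiv one_ne_zero).norm
  have hbound : ∀ z ∈ cube N ξ k, ‖fderiv ℝ g z‖ ≤ ⨆ z ∈ cube N ξ k, ‖gradient g z‖ :=
    fun z hz => norm_gradient_eq_norm_fderiv g z ▸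
      (isCompact_cube N ξ k).le_biSup_of_continuousOn hgrad.continuousOn hz
  calc |g x - g y| ≤ (⨆ z ∈ cube N ξ k, ‖gradient g z‖) * ‖x - y‖ :=
        (convex_cube N ξ k).norm_image_sub_le_of_norm_fderiv_le
          (fun z _ => hg.differentiable one_ne_zero z) hbound hy hx
    _ ≤ _ := mul_le_mul_of_nonneg_left (norm_sub_le_of_mem_cube hξ hx hy)
        ((norm_nonneg _).trans (hbound x hx))

end Cube

noncomputable def prodAverage {ι : Type*} [Fintype ι] (f : ι → ℝ → ℂ) (p : ℝ) : ℂ :=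
  ∏ i, (1 / p : ℂ) * ∫ t in (0 : ℝ)..p, f i t

section Average

variable {ι : Type*} [Fintype ι] {f : ι → ℝ → ℂ} {p : ℝ}

theorem norm_prod_le_one {R : Type*} [NormedCommRing R] [NormOneClass R] {a : ι → R}
    (ha : ∀ i, ‖a i‖ ≤ 1) : ‖∏ i, a i‖ ≤ 1 :=
  (Finset.norm_prod_le _ a).trans (Finset.prod_le_one (fun _ _ => norm_nonneg _) fun i _ => ha i)

theorem norm_prodAverage_le_one (hp : 0 < p) (hf : ∀ i t, ‖f i t‖ ≤ 1) :
    ‖prodAverage f p‖ ≤ 1 := by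
  refine norm_prod_le_one fun i => ?_
  have h := intervalIntegral.norm_integral_le_of_norm_le_const (a := 0) (b := p) fun t _ => hf i t
  rw [sub_zero, abs_of_pos hp, one_mul] at h
  rw [norm_mul, show ‖(1 / p : ℂ)‖ = p⁻¹ by simp [hp.le]]
  calc p⁻¹ * ‖∫ t in (0 : ℝ)..p, f i t‖ ≤ p⁻¹ * p := by gcongr
    _ = 1 := inv_mul_cancel₀ hp.ne'

theorem norm_prod_comp_sub_prodAverage_le_two (hp : 0 < p) (hf : ∀ i t, ‖f i t‖ ≤ 1) (ξ : ℝ)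
    (y z : ι → ℝ) : ‖∏ i, f i (ξ * (z i + y i)) - prodAverage f p‖ ≤ 2 :=
  (norm_sub_le_of_le (norm_prod_le_one fun i => hf i _) (norm_prodAverage_le_one hp hf)).trans_eq
    one_add_one_eq_two

theorem measurable_prod_comp_mul_add (hf : ∀ i, Measurable (f i)) (ξ : ℝ) (y : ι → ℝ) :
    Measurable fun z : ι → ℝ => ∏ i, f i (ξ * (z i + y i)) :=
  Finset.measurable_prod _ fun i _ => (hf i).comp (by fun_prop)

theorem setIntegral_boxIco_prod_comp_mul_add {ξ : ℝ} (hf : ∀ i, Periodic (f i) p) (hp : 0 < p)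
    (hξ : 0 < ξ) (y : ι → ℝ) (k : ι → ℤ) :
    ∫ z in boxIco (p / ξ) k, ∏ i, f i (ξ * (z i + y i)) =
      volume.real (boxIco (p / ξ) k) • prodAverage f p := by
  have hcell : ∀ i, ∫ t in Ico (k i • (p / ξ)) ((k i + 1) • (p / ξ)), f i (ξ * (t + y i)) =
      ((p / ξ : ℝ) : ℂ) * ((1 / p : ℂ) * ∫ t in (0 : ℝ)..p, f i t) := fun i => by
    rw [add_smul, one_smul, (hf i).setIntegral_Ico_comp_mul_add hp.le hξ, Complex.real_smul]
    have : (p : ℂ) ≠ 0 := by exact_mod_cast hp.ne'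
    push_cast
    field_simp
  have hvol : volume.real (boxIco (p / ξ) k) = (p / ξ) ^ Fintype.card ι := by
    rw [measureReal_def, volume_boxIco, ENNReal.toReal_pow, ENNReal.toReal_ofReal (by positivity)]
  rw [hvol, boxIco, volume_pi, setIntegral_univ_pi_prod _ _ fun i t => f i (ξ * (t + y i)),
    Finset.prod_congr rfl fun i _ => hcell i, Finset.prod_mul_distrib, Finset.prod_const,
    Finset.card_univ, Complex.real_smul, prodAverage]
  push_cast
  rfl

end Average

theorem toLp_mem_cube_of_mem_boxIco {N : ℕ} {ξ : ℝ} {k : Fin N → ℤ} {z : Fin N → ℝ}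
    (hz : z ∈ boxIco (2 * π / ξ) k) : WithLp.toLp 2 z ∈ cube N ξ k := fun i => by
  obtain ⟨hlo, hhi⟩ := hz i (mem_univ i)
  simp only [zsmul_eq_mul, Int.cast_add, Int.cast_one] at hlo hhi
  exact ⟨(by ring : 2 * π * (k i : ℝ) / ξ = k i * (2 * π / ξ)).trans_le hlo,
    hhi.le.trans_eq (by ring)⟩

section Oscillation

variable {N : ℕ} {ξ : ℝ} {f : Fin N → ℝ → ℂ} {g : EuclideanSpace ℝ (Fin N) → ℝ}

theorem integrable_prod_comp_sub_prodAverage_mul (hfm : ∀ i, Measurable (f i))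
    (hfbd : ∀ i t, ‖f i t‖ ≤ 1) (hgint : Integrable fun z : Fin N → ℝ => g (WithLp.toLp 2 z))
    (y : Fin N → ℝ) :
    Integrable fun z : Fin N → ℝ =>
      (∏ i, f i (ξ * (z i + y i)) - prodAverage f (2 * π)) * g (WithLp.toLp 2 z) :=
  hgint.ofReal.bdd_mul ((measurable_prod_comp_mul_add hfm ξ y).sub_const _).aestronglyMeasurable
    (Eventually.of_forall (norm_prod_comp_sub_prodAverage_le_two two_pi_pos hfbd ξ y))

theorem norm_setIntegral_boxIco_sub_prodAverage_mul_le (hξ : 0 < ξ)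
    (hfm : ∀ i, Measurable (f i)) (hfper : ∀ i, Periodic (f i) (2 * π))
    (hfbd : ∀ i t, ‖f i t‖ ≤ 1) (hg : ContDiff ℝ 1 g)
    (hgint : Integrable fun z : Fin N → ℝ => g (WithLp.toLp 2 z)) (y : Fin N → ℝ)
    (k : Fin N → ℤ) :
    ‖∫ z in boxIco (2 * π / ξ) k,
        (∏ i, f i (ξ * (z i + y i)) - prodAverage f (2 * π)) * g (WithLp.toLp 2 z)‖ ≤
      2 * ((⨆ x ∈ cube N ξ k, ‖gradient g x‖) * (√N * (2 * π / ξ))) * (2 * π / ξ) ^ N := by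
  set T := 2 * π / ξ
  have hT : 0 < T := by positivity
  have hvol : volume.real (boxIco T k) = T ^ N := by
    rw [measureReal_def, volume_boxIco, ENNReal.toReal_pow, ENNReal.toReal_ofReal hT.le,
      Fintype.card_fin]
  have hfin : volume (boxIco T k) < ⊤ := by
    rw [volume_boxIco]
    exact ENNReal.pow_lt_top ENNReal.ofReal_lt_top
  have hΦint : IntegrableOn (fun z : Fin N → ℝ => ∏ i, f i (ξ * (z i + y i))) (boxIco T k) :=
    Measure.integrableOn_of_bounded hfin.ne
      (measurable_prod_comp_mul_add hfm ξ y).aestronglyMeasurable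
      (Eventually.of_forall fun z => norm_prod_le_one fun i => hfbd i _)
  have hmean : ∫ z in boxIco T k, (∏ i, f i (ξ * (z i + y i)) - prodAverage f (2 * π)) = 0 := by
    rw [integral_sub hΦint (integrableOn_const hfin.ne), setIntegral_const,
      setIntegral_boxIco_prod_comp_mul_add hfper two_pi_pos hξ, sub_self]
  have hcorner : (fun i => k i • T) ∈ boxIco T k := fun i _ =>
    ⟨le_rfl, by rw [add_smul, one_smul]; exact lt_add_of_pos_right _ hT⟩
  calc _ ≤ 2 * ((⨆ x ∈ cube N ξ k, ‖gradient g x‖) * (√N * T)) * volume.real (boxIco T k) :=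
        norm_setIntegral_mul_le_of_setIntegral_eq_zero hfin
          (hΦint.sub (integrableOn_const hfin.ne)) hmean
          (integrable_prod_comp_sub_prodAverage_mul hfm hfbd hgint y).integrableOn
          (fun z _ => norm_prod_comp_sub_prodAverage_le_two two_pi_pos hfbd ξ y z)
          fun z hz => abs_sub_le_of_mem_cube hξ hg
            (toLp_mem_cube_of_mem_boxIco hz) (toLp_mem_cube_of_mem_boxIco hcorner)
    _ = _ := by rw [hvol]

theorem norm_integral_prod_comp_mul_sub_prodAverage_le (hξ : 0 < ξ)
    (hfm : ∀ i, Measurable (f i)) (hfper : ∀ i, Periodic (f i) (2 * π))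
    (hfbd : ∀ i t, ‖f i t‖ ≤ 1) (hg : ContDiff ℝ 1 g)
    (hgint : Integrable fun z : Fin N → ℝ => g (WithLp.toLp 2 z))
    (hg1 : ∫ z : Fin N → ℝ, g (WithLp.toLp 2 z) = 1)
    (hsum : Summable fun k : Fin N → ℤ => ⨆ x ∈ cube N ξ k, ‖gradient g x‖) (y : Fin N → ℝ) :
    ‖(∫ z : Fin N → ℝ, (∏ i, f i (ξ * (z i + y i))) * g (WithLp.toLp 2 z)) -
        prodAverage f (2 * π)‖ ≤
      4 * π * (√N / ξ) * ∑' k : Fin N → ℤ, (2 * π / ξ) ^ N * ⨆ x ∈ cube N ξ k, ‖gradient g x‖ := by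
  have hint := integrable_prod_comp_sub_prodAverage_mul (ξ := ξ) hfm hfbd hgint y
  have hΦG : Integrable fun z : Fin N → ℝ => (∏ i, f i (ξ * (z i + y i))) * g (WithLp.toLp 2 z) :=
    hgint.ofReal.bdd_mul (measurable_prod_comp_mul_add hfm ξ y).aestronglyMeasurable
      (Eventually.of_forall fun z => norm_prod_le_one fun i => hfbd i _)
  have hcentre : ∫ z : Fin N → ℝ,
      (∏ i, f i (ξ * (z i + y i)) - prodAverage f (2 * π)) * g (WithLp.toLp 2 z) =
        (∫ z : Fin N → ℝ, (∏ i, f i (ξ * (z i + y i))) * g (WithLp.toLp 2 z)) -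
          prodAverage f (2 * π) := by
    have hCG : Integrable fun z : Fin N → ℝ => prodAverage f (2 * π) * g (WithLp.toLp 2 z) :=
      hgint.ofReal.const_mul _
    simp_rw [sub_mul]
    rw [integral_sub hΦG hCG, integral_const_mul, integral_complex_ofReal, hg1,
      Complex.ofReal_one, mul_one]
  rw [← hcentre, ← tsum_mul_left]
  refine (norm_integral_le_tsum_of_iUnion_eq_univ measurableSet_boxIco pairwise_disjoint_boxIco
    (iUnion_boxIco (by positivity)) hint
    (norm_setIntegral_boxIco_sub_prodAverage_mul_le hξ hfm hfper hfbd hg hgint y) ?_).trans_eq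
    (tsum_congr fun k => by ring)
  exact (hsum.mul_left (2 * (√N * (2 * π / ξ)) * (2 * π / ξ) ^ N)).congr fun k => by ring

end Oscillation

theorem stmt_6_general (N : ℕ) (ξ : ℝ) (hξ : 0 < ξ)
    (f : Fin N → ℝ → ℂ) (hfm : ∀ i, Measurable (f i))
    (hfper : ∀ i, Function.Periodic (f i) (2 * π))
    (hfbd : ∀ i t, ‖f i t‖ ≤ 1)
    (g : EuclideanSpace ℝ (Fin N) → ℝ) (hg : ContDiff ℝ 1 g)
    (hgint : Integrable g) (hg1 : ∫ x, g x = 1)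
    (hsum1 : Summable (fun k : Fin N → ℤ => ⨆ x ∈ cube N ξ k, ‖gradient g x‖)) :
    ∀ y : EuclideanSpace ℝ (Fin N),
      ‖(∫ x : EuclideanSpace ℝ (Fin N), (∏ i, f i (ξ * (x i + y i))) * (g x : ℂ))
          - ∏ i, (1 / (2 * π) : ℂ) * ∫ t in (0 : ℝ)..(2 * π), f i t‖
        ≤ 4 * π * (Real.sqrt N / ξ) *
            ∑' k : Fin N → ℤ, (2 * π / ξ) ^ N * ⨆ x ∈ cube N ξ k, ‖gradient g x‖ := by
  intro y
  have htoLp : MeasurePreserving (MeasurableEquiv.toLp 2 (Fin N → ℝ)) :=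
    PiLp.volume_preserving_toLp (Fin N)
  have hC : ∏ i, (1 / (2 * π) : ℂ) * ∫ t in (0 : ℝ)..(2 * π), f i t = prodAverage f (2 * π) := by
    push_cast [prodAverage]
    rfl
  rw [hC, ← htoLp.integral_comp']
  exact norm_integral_prod_comp_mul_sub_prodAverage_le hξ hfm hfper hfbd hg
    ((htoLp.integrable_comp_emb (MeasurableEquiv.toLp 2 _).measurableEmbedding).2 hgint)
    ((htoLp.integral_comp' g).trans hg1) hsum1 y

/-- The expectation of a product of rapidly oscillating `2π`-periodic functions against a
smooth probability density is close to the product of the averages of those functions,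
with error `4π √N/ξ Σ_k (2π/ξ)^N sup_{H_k} ‖∇g‖`. -/
theorem stmt_6 (N : ℕ) (hN : 0 < N) (ξ : ℝ) (hξ : 0 < ξ)
    (f : Fin N → ℝ → ℂ) (hfm : ∀ i, Measurable (f i))
    (hfper : ∀ i, Function.Periodic (f i) (2 * π))
    (hfbd : ∀ i t, ‖f i t‖ ≤ 1)
    (g : EuclideanSpace ℝ (Fin N) → ℝ) (hg : ContDiff ℝ 1 g)
    (hg0 : ∀ x, 0 ≤ g x) (hgint : Integrable g) (hg1 : ∫ x, g x = 1)
    (hsum1 : Summable (fun k : Fin N → ℤ => ⨆ x ∈ cube N ξ k, ‖gradient g x‖))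
    (hsum2 : Summable (fun k : Fin N → ℤ =>
      g ((EuclideanSpace.equiv (Fin N) ℝ).symm (fun i => 2 * π * (k i : ℝ) / ξ)))) :
    ∀ y : EuclideanSpace ℝ (Fin N),
      ‖(∫ x : EuclideanSpace ℝ (Fin N), (∏ i, f i (ξ * (x i + y i))) * (g x : ℂ))
          - ∏ i, (1 / (2 * π) : ℂ) * ∫ t in (0 : ℝ)..(2 * π), f i t‖
        ≤ 4 * π * (Real.sqrt N / ξ) *
            ∑' k : Fin N → ℤ, (2 * π / ξ) ^ N * ⨆ x ∈ cube N ξ k, ‖gradient g x‖ :=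
  stmt_6_general N ξ hξ f hfm hfper hfbd g hg hgint hg1 hsum1
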